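/- arXiv:1902.04480 — 5 statements merged into one kernel-verified Lean document; each statement's English description precedes it below -/
import Mathlib

section
/- Define functions χ_{k,j} : ℝ → ℝ for k ≥ 1 and 0 ≤ j ≤ k−1 recursively by: χ_{1,0}(x) = ψ(x,x); and for each k ≥ 1, χ_{k+1,0}(x) = χ_{k,0}(x), χ_{k+1,j}(x) = χ_{k,j}(x) + χ_{k,j−1}'(x) for 1 ≤ j ≤ k−1, and χ_{k+1,k}(x) = (∂_x^kψ)(x,x) + χ_{k,k−1}'(x), where (∂_x^kψ)(x,x) is the k-th partial derivative of ψ in its first argument evaluated on the diagonal. Then for every integer k ≥ 1, every x ∈ [0,1] and every t ≥ 0: (∂_x^k u)(x,t) = (∂_x^k w)(x,t) − ∫₀ˣ (∂_x^kψ)(x,y)·w(y,t) dy − Σ_{j=0}^{k−1} χ_{k,j}(x)·(∂_x^{k−j−1}w)(x,t) − Γ^{(k)}(x)·X(t), where Γ^{(k)} is the k-th derivative of Γ. -/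
open scoped Matrix
open Set intervalIntegral
noncomputable def chi (ψ : ℝ → ℝ → ℝ) : ℕ → ℕ → ℝ → ℝ
  | 0, _ => fun _ => 0
  | 1, j => if j = 0 then fun x => ψ x x else fun _ => 0
  | (k+2), j =>
      if j = 0 then chi ψ (k+1) 0
      else if j = k+1 then
        fun x => iteratedDeriv (k+1) (fun s => ψ s x) x + deriv (chi ψ (k+1) k) x
      else fun x => chi ψ (k+1) j x + deriv (chi ψ (k+1) (j-1)) x

namespace Stmt2Aux

open MeasureTheory

/-! ### Iterated partial derivative of `ψ` in the first variable -/

noncomputable def pk (ψ : ℝ → ℝ → ℝ) : ℕ → ℝ → ℝ → ℝ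
  | 0 => ψ
  | (k+1) => fun x y => deriv (fun s => pk ψ k s y) x

variable {ψ : ℝ → ℝ → ℝ}

lemma pk_contDiff (hψ : ContDiff ℝ (⊤ : ℕ∞) (Function.uncurry ψ)) :
    ∀ k, ContDiff ℝ (⊤ : ℕ∞) (Function.uncurry (pk ψ k))
  | 0 => hψ.of_le (by simp)
  | (k+1) => by
    have ih := pk_contDiff hψ k
    have h1 : ContDiff ℝ (⊤ : ℕ∞)
        (fun p : ℝ × ℝ => fderiv ℝ (fun s => pk ψ k s p.2) p.1 1) := by
      apply ContDiff.fderiv_apply (f := fun (p : ℝ × ℝ) s => pk ψ k s p.2)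
        (g := fun p => p.1) (k := fun _ => (1:ℝ))
      · exact ih.comp (contDiff_snd.prodMk (contDiff_fst.snd))
      · exact contDiff_fst
      · exact contDiff_const
      · exact le_of_eq rfl
    have h2 : Function.uncurry (pk ψ (k+1)) =
        fun p : ℝ × ℝ => fderiv ℝ (fun s => pk ψ k s p.2) p.1 1 := by
      ext p
      simp [Function.uncurry, pk, fderiv_apply_one_eq_deriv]
    rw [h2]; exact h1

lemma pk_section_contDiff (hψ : ContDiff ℝ (⊤ : ℕ∞) (Function.uncurry ψ)) (k : ℕ) (y : ℝ) :
    ContDiff ℝ (⊤ : ℕ∞) (fun s => pk ψ k s y) :=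
  (pk_contDiff hψ k).comp (contDiff_id.prodMk contDiff_const)

lemma pk_hasDerivAt (hψ : ContDiff ℝ (⊤ : ℕ∞) (Function.uncurry ψ)) (k : ℕ) (x y : ℝ) :
    HasDerivAt (fun s => pk ψ k s y) (pk ψ (k+1) x y) x :=
  (((pk_section_contDiff hψ k y).differentiable (by simp)) x).hasDerivAt

lemma iteratedDeriv_section : ∀ (k : ℕ) (y x : ℝ),
    iteratedDeriv k (fun s => ψ s y) x = pk ψ k x y
  | 0, y, x => by simp [pk]
  | (k+1), y, x => by
    rw [iteratedDeriv_succ]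
    have : iteratedDeriv k (fun s => ψ s y) = fun x => pk ψ k x y :=
      funext fun x => iteratedDeriv_section k y x
    rw [this]; rfl

/-! ### Unfolding lemmas for `chi` -/

lemma chi_one_zero : chi ψ 1 0 = fun x => ψ x x := by simp [chi]

lemma chi_two_zero (m : ℕ) : chi ψ (m+2) 0 = chi ψ (m+1) 0 := by simp [chi]

lemma chi_two_mid (m j : ℕ) (h1 : j ≠ 0) (h2 : j ≠ m + 1) :
    chi ψ (m+2) j = fun x => chi ψ (m+1) j x + deriv (chi ψ (m+1) (j-1)) x := by
  rw [chi, if_neg h1, if_neg h2]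

lemma chi_two_last (m : ℕ) :
    chi ψ (m+2) (m+1) = fun x =>
      iteratedDeriv (m+1) (fun s => ψ s x) x + deriv (chi ψ (m+1) m) x := by
  rw [chi, if_neg (Nat.succ_ne_zero m), if_pos rfl]

/-! ### Smoothness of `chi` -/

lemma chi_contDiff (hψ : ContDiff ℝ (⊤ : ℕ∞) (Function.uncurry ψ)) :
    ∀ k j, ContDiff ℝ (⊤ : ℕ∞) (chi ψ k j)
  | 0, j => by simp only [chi]; exact contDiff_const
  | 1, j => by
    rcases eq_or_ne j 0 with rfl | hj
    · rw [chi_one_zero]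
      exact (hψ.of_le (by simp)).comp (contDiff_id.prodMk contDiff_id)
    · simp only [chi, if_neg hj]; exact contDiff_const
  | (k+2), j => by
    have ih := fun j => chi_contDiff hψ (k+1) j
    rcases eq_or_ne j 0 with rfl | h0
    · rw [chi_two_zero]; exact ih 0
    rcases eq_or_ne j (k+1) with rfl | hl
    · rw [chi_two_last]
      have hdiag : ContDiff ℝ (⊤ : ℕ∞) (fun x => iteratedDeriv (k+1) (fun s => ψ s x) x) := by
        have : (fun x => iteratedDeriv (k+1) (fun s => ψ s x) x)
            = fun x => pk ψ (k+1) x x := funext fun x => iteratedDeriv_section (k+1) x x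
        rw [this]
        exact (pk_contDiff hψ (k+1)).comp (contDiff_id.prodMk contDiff_id)
      exact hdiag.add (contDiff_infty_iff_deriv.mp (ih k)).2
    · rw [chi_two_mid k j h0 hl]
      exact (ih j).add (contDiff_infty_iff_deriv.mp (ih (j-1))).2

lemma chi_hasDerivAt (hψ : ContDiff ℝ (⊤ : ℕ∞) (Function.uncurry ψ)) (k j : ℕ) (x : ℝ) :
    HasDerivAt (chi ψ k j) (deriv (chi ψ k j) x) x :=
  (((chi_contDiff hψ k j).differentiable (by simp)) x).hasDerivAt

/-! ### Derivative of a dot product with a constant vector -/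

lemma hasDerivAt_dot {n : ℕ} {V : ℝ → Fin n → ℝ} {x : ℝ}
    (hV : DifferentiableAt ℝ V x) (c : Fin n → ℝ) :
    HasDerivAt (fun x => V x ⬝ᵥ c) (deriv V x ⬝ᵥ c) x := by
  simp only [dotProduct]
  exact HasDerivAt.fun_sum fun i _ => ((hasDerivAt_pi.mp hV.hasDerivAt) i).mul_const (c i)

/-! ### The combinatorial identity for the recursion of `chi` -/

lemma sum_identity (ψ : ℝ → ℝ → ℝ) (W : ℝ → ℝ) (x : ℝ) (m : ℕ) :
    ∑ j ∈ Finset.range (m+2), chi ψ (m+2) j x * iteratedDeriv (m+1-j) W x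
    = pk ψ (m+1) x x * W x
      + ∑ j ∈ Finset.range (m+1),
          (deriv (chi ψ (m+1) j) x * iteratedDeriv (m-j) W x
            + chi ψ (m+1) j x * iteratedDeriv (m+1-j) W x) := by
  rw [Finset.sum_range_succ' (fun j => chi ψ (m+2) j x * iteratedDeriv (m+1-j) W x),
    Finset.sum_range_succ]
  rw [Finset.sum_add_distrib, Finset.sum_range_succ
    (fun j => deriv (chi ψ (m+1) j) x * iteratedDeriv (m-j) W x),
    Finset.sum_range_succ' (fun j => chi ψ (m+1) j x * iteratedDeriv (m+1-j) W x)]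
  have e0 : chi ψ (m+2) 0 x = chi ψ (m+1) 0 x := by rw [chi_two_zero]
  have elast : chi ψ (m+2) (m+1) x
      = pk ψ (m+1) x x + deriv (chi ψ (m+1) m) x := by
    simp only [chi_two_last, iteratedDeriv_section]
  have emid : ∀ j ∈ Finset.range m,
      chi ψ (m+2) (j+1) x * iteratedDeriv (m+1-(j+1)) W x
      = chi ψ (m+1) (j+1) x * iteratedDeriv (m-j) W x
        + deriv (chi ψ (m+1) j) x * iteratedDeriv (m-j) W x := by
    intro j hj
    rw [Finset.mem_range] at hj
    rw [chi_two_mid m (j+1) (Nat.succ_ne_zero j) (by omega)]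
    simp only [Nat.add_sub_cancel, Nat.succ_sub_succ, Nat.sub_zero]
    ring
  rw [Finset.sum_congr rfl emid, Finset.sum_add_distrib]
  have h1 : m + 1 - (m+1) = 0 := by omega
  have h2 : ∀ j, m + 1 - (j+1) = m - j := fun j => by omega
  simp only [h1, h2, iteratedDeriv_zero, e0, elast, Nat.sub_self]
  ring



lemma leibniz {G D : ℝ → ℝ → ℝ} (hG : Continuous (Function.uncurry G))
    (hD : Continuous (Function.uncurry D))
    (hdiff : ∀ x y : ℝ, HasDerivAt (fun s => G s y) (D x y) x) (x₀ : ℝ) :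
    HasDerivAt (fun x => ∫ y in (0:ℝ)..x, G x y)
      (G x₀ x₀ + ∫ y in (0:ℝ)..x₀, D x₀ y) x₀ := by
  have hGsec : ∀ x : ℝ, Continuous fun y => G x y := fun x =>
    hG.comp (continuous_const.prodMk continuous_id)
  have hDsec : Continuous fun y => D x₀ y :=
    hD.comp (continuous_const.prodMk continuous_id)
  -- Part A : fixed endpoints, moving parameter
  obtain ⟨C, hC⟩ := ((isCompact_Icc (a := x₀ - 1) (b := x₀ + 1)).prod
      (isCompact_uIcc (a := (0:ℝ)) (b := x₀))).exists_bound_of_continuousOn hD.continuousOn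
  have hA : HasDerivAt (fun x => ∫ y in (0:ℝ)..x₀, G x y) (∫ y in (0:ℝ)..x₀, D x₀ y) x₀ := by
    have h := intervalIntegral.hasDerivAt_integral_of_dominated_loc_of_deriv_le
      (F := G) (F' := D) (x₀ := x₀) (a := 0) (b := x₀) (bound := fun _ => C)
      (μ := volume) (Metric.ball_mem_nhds x₀ zero_lt_one)
      (Filter.Eventually.of_forall fun x => (hGsec x).aestronglyMeasurable)
      ((hGsec x₀).intervalIntegrable _ _)
      hDsec.aestronglyMeasurable
      (ae_of_all _ fun y hy x hx => by
        have hx' : x ∈ Icc (x₀ - 1) (x₀ + 1) := by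
          rw [Metric.mem_ball, Real.dist_eq, abs_lt] at hx
          constructor <;> linarith [hx.1, hx.2]
        exact hC (x, y) ⟨hx', Set.uIoc_subset_uIcc hy⟩)
      intervalIntegrable_const
      (ae_of_all _ fun y _ x _ => hdiff x y)
    exact h.2
  -- Part B : moving endpoint
  have hB : HasDerivAt (fun x => ∫ y in x₀..x, G x y) (G x₀ x₀) x₀ := by
    rw [hasDerivAt_iff_isLittleO, Asymptotics.isLittleO_iff]
    intro c hc
    obtain ⟨δ, hδ, hball⟩ := Metric.continuousAt_iff.mp (hG.continuousAt (x := (x₀, x₀))) c hc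
    filter_upwards [Metric.ball_mem_nhds x₀ hδ] with x hx
    have key : ∀ y ∈ Set.uIoc x₀ x, ‖G x y - G x₀ x₀‖ ≤ c := by
      intro y hy
      have h1 : |y - x₀| ≤ |x - x₀| := by
        rw [Set.mem_uIoc] at hy
        rcases hy with ⟨h, h'⟩ | ⟨h, h'⟩ <;> rw [abs_le] <;> constructor <;>
          cases abs_cases (x - x₀) <;> linarith [le_abs_self (x - x₀), neg_abs_le (x - x₀)]
      have hd : dist ((x, y) : ℝ × ℝ) (x₀, x₀) < δ := by
        rw [Prod.dist_eq]
        rw [Metric.mem_ball] at hx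
        refine max_lt hx ?_
        rw [Real.dist_eq] at hx ⊢
        exact lt_of_le_of_lt h1 hx
      have := hball hd
      simp only [Function.uncurry, Real.dist_eq] at this
      rw [Real.norm_eq_abs]
      exact this.le
    have hInt : IntervalIntegrable (fun y => G x y) volume x₀ x :=
      (hGsec x).intervalIntegrable _ _
    calc ‖(∫ y in x₀..x, G x y) - (∫ y in x₀..x₀, G x₀ y) - (x - x₀) • G x₀ x₀‖
        = ‖∫ y in x₀..x, (G x y - G x₀ x₀)‖ := by
          rw [intervalIntegral.integral_same, sub_zero,
            intervalIntegral.integral_sub hInt intervalIntegrable_const,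
            intervalIntegral.integral_const]
      _ ≤ c * |x - x₀| := intervalIntegral.norm_integral_le_of_norm_le_const key
      _ = c * ‖x - x₀‖ := by rw [Real.norm_eq_abs]
  have hsplit : (fun x => (∫ y in (0:ℝ)..x₀, G x y) + ∫ y in x₀..x, G x y)
      = fun x => ∫ y in (0:ℝ)..x, G x y := by
    funext x
    exact intervalIntegral.integral_add_adjacent_intervals
      ((hGsec x).intervalIntegrable _ _) ((hGsec x).intervalIntegrable _ _)
  have h := hA.fun_add hB
  rw [hsplit] at h
  rwa [add_comm] at h


end Stmt2Aux

/-- the k-th spatial derivative of the inverse backstepping transform. -/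
theorem stmt2
    (n : ℕ) (hn : 1 ≤ n)
    (ψ : ℝ → ℝ → ℝ) (hψ : ContDiff ℝ (⊤ : ℕ∞) (Function.uncurry ψ))
    (Γ : ℝ → Fin n → ℝ) (hΓ : ContDiff ℝ (⊤ : ℕ∞) Γ)
    (w : ℝ → ℝ → ℝ) (hw : ContDiff ℝ (⊤ : ℕ∞) (Function.uncurry w))
    (X : ℝ → Fin n → ℝ) (hX : ContDiff ℝ (⊤ : ℕ∞) X)
    (u : ℝ → ℝ → ℝ)
    (hu : ∀ x t : ℝ, u x t =
      w x t - (∫ y in (0:ℝ)..x, ψ x y * w y t) - Γ x ⬝ᵥ X t)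
    (k : ℕ) (hk : 1 ≤ k) (x : ℝ) (hx : x ∈ Icc (0:ℝ) 1) (t : ℝ) (ht : 0 ≤ t) :
    iteratedDeriv k (fun s => u s t) x =
      iteratedDeriv k (fun s => w s t) x
      - (∫ y in (0:ℝ)..x, iteratedDeriv k (fun s => ψ s y) x * w y t)
      - (∑ j ∈ Finset.range k,
          chi ψ k j x * iteratedDeriv (k - j - 1) (fun s => w s t) x)
      - iteratedDeriv k Γ x ⬝ᵥ X t := by
  open Stmt2Aux in
  have hW : ContDiff ℝ (⊤ : ℕ∞) (fun s => w s t) :=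
    (hw.of_le (by simp)).comp (contDiff_id.prodMk contDiff_const)
  have hΓ' : ContDiff ℝ (⊤ : ℕ∞) Γ := hΓ.of_le (by simp)
  have hwc : Continuous (Function.uncurry w) := hw.continuous
  have hGD : ∀ k : ℕ, Continuous (Function.uncurry (fun a y => pk ψ k a y * w y t)) := by
    intro k
    have h1 : Continuous (Function.uncurry (pk ψ k)) := (pk_contDiff hψ k).continuous
    exact h1.mul (hwc.comp (continuous_snd.prodMk continuous_const))
  have hLeib : ∀ (k : ℕ) (x₀ : ℝ),
      HasDerivAt (fun z => ∫ y in (0:ℝ)..z, pk ψ k z y * w y t)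
        (pk ψ k x₀ x₀ * w x₀ t + ∫ y in (0:ℝ)..x₀, pk ψ (k+1) x₀ y * w y t) x₀ :=
    fun k x₀ => leibniz (hGD k) (hGD (k+1))
      (fun a y => (pk_hasDerivAt hψ k a y).mul_const _) x₀
  have hDW : ∀ (m : ℕ) (z : ℝ),
      HasDerivAt (iteratedDeriv m (fun s => w s t))
        (iteratedDeriv (m+1) (fun s => w s t) z) z := by
    intro m z
    have hd : ContDiff ℝ (⊤ : ℕ∞) (iteratedDeriv m (fun s => w s t)) := by
      rw [iteratedDeriv_eq_iterate]; exact hW.iterate_deriv m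
    have h := ((hd.differentiable (by simp)) z).hasDerivAt
    rwa [← iteratedDeriv_succ] at h
  have hDΓ : ∀ (m : ℕ) (z : ℝ),
      HasDerivAt (fun z => iteratedDeriv m Γ z ⬝ᵥ X t)
        (iteratedDeriv (m+1) Γ z ⬝ᵥ X t) z := by
    intro m z
    have hd : ContDiff ℝ (⊤ : ℕ∞) (iteratedDeriv m Γ) := by
      rw [iteratedDeriv_eq_iterate]; exact hΓ'.iterate_deriv m
    have h := hasDerivAt_dot ((hd.differentiable (by simp)) z) (X t)
    rwa [← iteratedDeriv_succ] at h
  have main : ∀ K, 1 ≤ K → ∀ z : ℝ,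
      iteratedDeriv K (fun s => u s t) z =
        iteratedDeriv K (fun s => w s t) z
        - (∫ y in (0:ℝ)..z, pk ψ K z y * w y t)
        - (∑ j ∈ Finset.range K,
            chi ψ K j z * iteratedDeriv (K - j - 1) (fun s => w s t) z)
        - iteratedDeriv K Γ z ⬝ᵥ X t := by
    intro K hK
    induction K, hK using Nat.le_induction with
    | base =>
      intro z
      have hU : (fun s => u s t) = fun s =>
          w s t - (∫ y in (0:ℝ)..s, ψ s y * w y t) - Γ s ⬝ᵥ X t := funext fun s => hu s t
      have h1 : HasDerivAt (fun s => w s t) (iteratedDeriv 1 (fun s => w s t) z) z := by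
        have := hDW 0 z; rwa [iteratedDeriv_zero] at this
      have h2 : HasDerivAt (fun s => ∫ y in (0:ℝ)..s, ψ s y * w y t)
          (ψ z z * w z t + ∫ y in (0:ℝ)..z, pk ψ 1 z y * w y t) z := hLeib 0 z
      have h3 : HasDerivAt (fun s => Γ s ⬝ᵥ X t) (iteratedDeriv 1 Γ z ⬝ᵥ X t) z := by
        have := hDΓ 0 z; rwa [iteratedDeriv_zero] at this
      rw [hU, iteratedDeriv_one, ((h1.fun_sub h2).fun_sub h3).deriv]
      simp only [Finset.sum_range_one, chi_one_zero, Nat.sub_self, iteratedDeriv_zero]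
      ring
    | succ m hm ih =>
      intro z
      obtain ⟨m', rfl⟩ : ∃ m', m = m' + 1 := ⟨m - 1, by omega⟩
      have hiter : iteratedDeriv (m'+1) (fun s => u s t) = fun z =>
          iteratedDeriv (m'+1) (fun s => w s t) z
          - (∫ y in (0:ℝ)..z, pk ψ (m'+1) z y * w y t)
          - (∑ j ∈ Finset.range (m'+1),
              chi ψ (m'+1) j z * iteratedDeriv (m'+1 - j - 1) (fun s => w s t) z)
          - iteratedDeriv (m'+1) Γ z ⬝ᵥ X t := funext ih
      have h1 := hDW (m'+1) z
      have h2 := hLeib (m'+1) z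
      have h3 : HasDerivAt (fun z => ∑ j ∈ Finset.range (m'+1),
            chi ψ (m'+1) j z * iteratedDeriv (m'+1 - j - 1) (fun s => w s t) z)
          (∑ j ∈ Finset.range (m'+1),
            (deriv (chi ψ (m'+1) j) z * iteratedDeriv (m'+1 - j - 1) (fun s => w s t) z
              + chi ψ (m'+1) j z * iteratedDeriv (m'+1 - j) (fun s => w s t) z)) z := by
        refine HasDerivAt.fun_sum fun j hj => ?_
        refine (chi_hasDerivAt hψ (m'+1) j z).mul ?_
        rw [Finset.mem_range] at hj
        have e : m' + 1 - j - 1 + 1 = m' + 1 - j := by omega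
        have := hDW (m' + 1 - j - 1) z
        rwa [e] at this
      have h4 := hDΓ (m'+1) z
      rw [iteratedDeriv_succ, hiter, (((h1.fun_sub h2).fun_sub h3).fun_sub h4).deriv]
      have e1 : ∀ j : ℕ, m' + 1 + 1 - j - 1 = m' + 1 - j := fun j => by omega
      have e2 : ∀ j : ℕ, m' + 1 - j - 1 = m' - j := fun j => by omega
      simp only [e1, e2]
      rw [sum_identity ψ (fun s => w s t) z m']
      ring
  rw [main k hk x]
  simp only [iteratedDeriv_section]
end

section
/- Assume G is invertible and set v = −C_z·G^{-1} ∈ ℝ^{1×m}. Define ϑ : ℝ → ℝ^{1×m} by ϑ(x) = [0, v]·exp(F·x)·[I_m; 0], i.e., the row vector consisting of the first m entries of [0, v]·exp(F·x). Then ϑ is twice differentiable and satisfies the kernel boundary value problem: q·ϑ''(x) = ϑ(x)·A_z for all x ∈ ℝ, ϑ(0) = 0, and ϑ(1) = −C_z. -/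
/-!
The row vector `u(x) = [0, v]·exp(xF)` satisfies `u' = [0, v]·F·exp(xF) = u·F`, and `ϑ` is its
first half. Since `F` swaps the two halves of a row vector, multiplying one of them by `A_z/q`,
`F²` acts as `A_z/q` on each half, so `q·ϑ'' = q·(u·F²)_first = ϑ·A_z`. At `x = 0` the first half
of `[0, v]` is `0`, and at `x = 1` it is `v·G = -C_z`.
-/

open scoped Matrix

/-- The block matrix `F = [[0, A_z/q],[I, 0]]`. -/
noncomputable def Fblock (m : ℕ) (q : ℝ) (Az : Matrix (Fin m) (Fin m) ℝ) :
    Matrix (Fin m ⊕ Fin m) (Fin m ⊕ Fin m) ℝ :=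
  Matrix.fromBlocks 0 (q⁻¹ • Az) 1 0

/-- `G = [0, I]·exp(F)·[I; 0]`, the lower-left `m×m` block of `exp F`. -/
noncomputable def Gblock (m : ℕ) (q : ℝ) (Az : Matrix (Fin m) (Fin m) ℝ) :
    Matrix (Fin m) (Fin m) ℝ :=
  (NormedSpace.exp (Fblock m q Az)).toBlocks₂₁

/-- `ϑ(x) = [0, v]·exp(F·x)·[I; 0]`, the first `m` entries of the row vector
`[0, v]·exp(F·x)`. -/
noncomputable def thetaKernel (m : ℕ) (q : ℝ) (Az : Matrix (Fin m) (Fin m) ℝ)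
    (v : Fin m → ℝ) (x : ℝ) : Fin m → ℝ :=
  fun j => (Sum.elim (0 : Fin m → ℝ) v ᵥ* NormedSpace.exp (x • Fblock m q Az)) (Sum.inl j)

open NormedSpace

theorem HasDerivAt.comp_right_pi {𝕜 ι ι' : Type*} [NontriviallyNormedField 𝕜] [Fintype ι]
    [Fintype ι'] {φ : 𝕜 → ι → 𝕜} {φ' : ι → 𝕜} {x : 𝕜} (h : HasDerivAt φ φ' x) (σ : ι' → ι) :
    HasDerivAt (fun t => φ t ∘ σ) (φ' ∘ σ) x :=
  hasDerivAt_pi.2 fun j => hasDerivAt_pi.1 h (σ j)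

namespace Matrix

variable {𝕂 n ι : Type*} [RCLike 𝕂] [Fintype n] [DecidableEq n]

theorem vecMul_vecMul_exp_smul_comm (w : n → 𝕂) (F : Matrix n n 𝕂) (t : 𝕂) :
    w ᵥ* F ᵥ* exp (t • F) = w ᵥ* exp (t • F) ᵥ* F := by
  rw [vecMul_vecMul, vecMul_vecMul, ((Commute.refl F).smul_right t).exp_right.eq]

open scoped Norms.Operator in
theorem hasDerivAt_vecMul_exp_smul (w : n → 𝕂) (F : Matrix n n 𝕂) (x : 𝕂) :
    HasDerivAt (fun t : 𝕂 => w ᵥ* exp (t • F)) (w ᵥ* F ᵥ* exp (x • F)) x := by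
  let vecMulLeft : Matrix n n 𝕂 →ₗ[𝕂] n → 𝕂 :=
    { toFun := (w ᵥ* ·)
      map_add' := fun M N => vecMul_add M N w
      map_smul' := fun c M => vecMul_smul w c M }
  rw [vecMul_vecMul]
  exact vecMulLeft.toContinuousLinearMap.hasFDerivAt.comp_hasDerivAt x
    (hasDerivAt_exp_smul_const' F x)

variable [Fintype ι]

theorem hasDerivAt_vecMul_exp_smul_comp (w : n → 𝕂) (F : Matrix n n 𝕂) (σ : ι → n) (x : 𝕂) :
    HasDerivAt (fun t : 𝕂 => (w ᵥ* exp (t • F)) ∘ σ) ((w ᵥ* F ᵥ* exp (x • F)) ∘ σ) x :=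
  (hasDerivAt_vecMul_exp_smul w F x).comp_right_pi σ

theorem deriv_vecMul_exp_smul_comp (w : n → 𝕂) (F : Matrix n n 𝕂) (σ : ι → n) :
    deriv (fun t : 𝕂 => (w ᵥ* exp (t • F)) ∘ σ) = fun t => (w ᵥ* F ᵥ* exp (t • F)) ∘ σ :=
  funext fun x => (hasDerivAt_vecMul_exp_smul_comp w F σ x).deriv

end Matrix

section

open Matrix

variable {m : ℕ} {q : ℝ} {Az : Matrix (Fin m) (Fin m) ℝ}

theorem vecMul_Fblock (u : Fin m ⊕ Fin m → ℝ) :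
    u ᵥ* Fblock m q Az = Sum.elim (u ∘ Sum.inr) ((u ∘ Sum.inl) ᵥ* (q⁻¹ • Az)) := by
  simp [Fblock, vecMul_fromBlocks]

theorem smul_vecMul_Fblock_vecMul_Fblock_comp_inl (hq : q ≠ 0) (u : Fin m ⊕ Fin m → ℝ) :
    q • ((u ᵥ* Fblock m q Az ᵥ* Fblock m q Az) ∘ Sum.inl) = (u ∘ Sum.inl) ᵥ* Az := by
  rw [vecMul_Fblock, vecMul_Fblock, Sum.elim_comp_inr, Sum.elim_comp_inl, vecMul_smul, smul_smul,
    mul_inv_cancel₀ hq, one_smul]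

theorem thetaKernel_zero (v : Fin m → ℝ) : thetaKernel m q Az v 0 = 0 := by
  funext j
  simp [thetaKernel]

theorem thetaKernel_one (v : Fin m → ℝ) : thetaKernel m q Az v 1 = v ᵥ* Gblock m q Az := by
  funext j
  rw [thetaKernel, one_smul, ← fromBlocks_toBlocks (exp (Fblock m q Az)), vecMul_fromBlocks]
  simp [Gblock]

end

theorem stmt4_general
    (m : ℕ)
    (Az : Matrix (Fin m) (Fin m) ℝ) (Cz : Fin m → ℝ)
    (q : ℝ) (hq : q ≠ 0)
    (hG : IsUnit (Gblock m q Az).det)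
    (ϑ : ℝ → Fin m → ℝ)
    (hϑ : ϑ = thetaKernel m q Az (-(Cz ᵥ* (Gblock m q Az)⁻¹))) :
    (Differentiable ℝ ϑ ∧ Differentiable ℝ (deriv ϑ))
    ∧ (∀ x : ℝ, q • deriv (deriv ϑ) x = ϑ x ᵥ* Az)
    ∧ ϑ 0 = 0
    ∧ ϑ 1 = -Cz := by
  set F := Fblock m q Az
  set w : Fin m ⊕ Fin m → ℝ := Sum.elim 0 (-(Cz ᵥ* (Gblock m q Az)⁻¹))
  have hϑ_exp : ϑ = fun t => (w ᵥ* exp (t • F)) ∘ Sum.inl := hϑ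
  have hϑ' : deriv ϑ = fun t => (w ᵥ* F ᵥ* exp (t • F)) ∘ Sum.inl := by
    rw [hϑ_exp, Matrix.deriv_vecMul_exp_smul_comp]
  refine ⟨⟨?_, ?_⟩, fun x => ?_, by rw [hϑ, thetaKernel_zero], ?_⟩
  · rw [hϑ_exp]
    exact fun x => (Matrix.hasDerivAt_vecMul_exp_smul_comp w F _ x).differentiableAt
  · rw [hϑ']
    exact fun x => (Matrix.hasDerivAt_vecMul_exp_smul_comp _ F _ x).differentiableAt
  · rw [hϑ', Matrix.deriv_vecMul_exp_smul_comp, hϑ_exp]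
    simp only [Matrix.vecMul_vecMul_exp_smul_comm]
    exact smul_vecMul_Fblock_vecMul_Fblock_comp_inl hq _
  · rw [hϑ, thetaKernel_one, Matrix.neg_vecMul, Matrix.vecMul_vecMul,
      Matrix.nonsing_inv_mul _ hG, Matrix.vecMul_one]

/-- the explicit kernel `ϑ(x) = [0, −C_z G⁻¹]·exp(Fx)·[I; 0]` is twice
differentiable and solves `q·ϑ'' = ϑ·A_z`, `ϑ(0) = 0`, `ϑ(1) = −C_z`. -/
theorem stmt4
    (m : ℕ) (hm : 1 ≤ m)
    (Az : Matrix (Fin m) (Fin m) ℝ) (Cz : Fin m → ℝ)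
    (q : ℝ) (hq : q ≠ 0)
    (hG : IsUnit (Gblock m q Az).det)
    (ϑ : ℝ → Fin m → ℝ)
    (hϑ : ϑ = thetaKernel m q Az (-(Cz ᵥ* (Gblock m q Az)⁻¹))) :
    (Differentiable ℝ ϑ ∧ Differentiable ℝ (deriv ϑ))
    ∧ (∀ x : ℝ, q • deriv (deriv ϑ) x = ϑ x ᵥ* Az)
    ∧ ϑ 0 = 0
    ∧ ϑ 1 = -Cz :=
  stmt4_general m Az Cz q hq hG ϑ hϑ
end

section
/- Suppose ϑ : ℝ → ℝ^{1×m} is twice continuously differentiable and satisfies q·ϑ''(x) = ϑ(x)·A_z for all x ∈ ℝ together with ϑ(0) = 0. Then ϑ(x) = [0, ϑ'(0)]·exp(F·x)·[I_m; 0] for all x ∈ ℝ. Moreover, if in addition ϑ(1) = −C_z and G is invertible, then ϑ'(0) = −C_z·G^{-1}. -/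
/-!
Writing `w = [ϑ, ϑ']`, the equation `q ϑ'' = ϑ A_z` becomes the first-order system `w' = w F`,
whose solutions are `w(x) = w(0) exp(xF)`. Since `w(0) = [0, ϑ'(0)]`, the first block of this
identity at `x = 1` reads `ϑ(1) = ϑ'(0) G`, which is solved for `ϑ'(0)` when `G` is invertible.
-/

open scoped Matrix

open Matrix NormedSpace

theorem hasDerivAt_vecMul {l n : Type*} [Fintype l] {w : ℝ → l → ℝ} {M : ℝ → Matrix l n ℝ}
    {w' : l → ℝ} {M' : Matrix l n ℝ} {x : ℝ} (hw : HasDerivAt w w' x)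
    (hM : ∀ i j, HasDerivAt (fun t => M t i j) (M' i j) x) :
    HasDerivAt (fun t => w t ᵥ* M t) (w' ᵥ* M x + w x ᵥ* M') x := by
  rw [hasDerivAt_pi]
  intro j
  simpa only [vecMul, dotProduct, Pi.add_apply, ← Finset.sum_add_distrib] using
    HasDerivAt.fun_sum fun i _ => (hasDerivAt_pi.mp hw i).fun_mul (hM i j)

section MatrixExp

attribute [local instance] Matrix.linftyOpNormedRing Matrix.linftyOpNormedAlgebra

variable {n : Type*} [Fintype n] [DecidableEq n]

theorem hasDerivAt_exp_smul_apply (F : Matrix n n ℝ) (t : ℝ) (i j : n) :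
    HasDerivAt (fun u : ℝ => exp (u • F) i j) ((exp (t • F) * F) i j) t :=
  (entryLinearMap ℝ ℝ i j).toContinuousLinearMap.hasFDerivAt.comp_hasDerivAt t
    (hasDerivAt_exp_smul_const F t)

theorem exp_smul_neg_mul_exp_smul (F : Matrix n n ℝ) (x : ℝ) :
    exp (x • -F) * exp (x • F) = 1 := by
  rw [← exp_add_of_commute _ _ (((Commute.refl F).neg_left).smul_left x |>.smul_right x),
    smul_neg, neg_add_cancel, exp_zero]

-- `w(u) exp(-uF)` has zero derivative since `F` commutes with `exp(-uF)`.
theorem eq_vecMul_exp_smul_of_hasDerivAt {F : Matrix n n ℝ} {w : ℝ → n → ℝ}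
    (hw : ∀ x, HasDerivAt w (w x ᵥ* F) x) (x : ℝ) :
    w x = w 0 ᵥ* exp (x • F) := by
  have hderiv : ∀ t, HasDerivAt (fun u => w u ᵥ* exp (u • -F)) 0 t := by
    intro t
    convert hasDerivAt_vecMul (hw t) (hasDerivAt_exp_smul_apply (-F) t) using 1
    have hcomm : F * exp (t • -F) = exp (t • -F) * F :=
      (((Commute.refl F).neg_right.smul_right t).exp_right).eq
    rw [vecMul_vecMul, hcomm, mul_neg, vecMul_neg, add_neg_cancel]
  have hconst : w x ᵥ* exp (x • -F) = w 0 := by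
    simpa [exp_zero] using is_const_of_deriv_eq_zero (fun t => (hderiv t).differentiableAt)
      (fun t => (hderiv t).deriv) x 0
  rw [← hconst, vecMul_vecMul, exp_smul_neg_mul_exp_smul, vecMul_one]

end MatrixExp

theorem sumElim_vecMul_Fblock {m : ℕ} (q : ℝ) (Az : Matrix (Fin m) (Fin m) ℝ)
    (u v : Fin m → ℝ) :
    Sum.elim u v ᵥ* Fblock m q Az = Sum.elim v (q⁻¹ • (u ᵥ* Az)) := by
  rw [Fblock, vecMul_fromBlocks, vecMul_smul]
  ext (i | i) <;> simp

theorem hasDerivAt_sumElim_deriv_of_ode {m : ℕ} {q : ℝ} (hq : q ≠ 0)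
    {Az : Matrix (Fin m) (Fin m) ℝ} {ϑ : ℝ → Fin m → ℝ} (hϑ : ContDiff ℝ 2 ϑ)
    (hode : ∀ x, q • deriv (deriv ϑ) x = ϑ x ᵥ* Az) (x : ℝ) :
    HasDerivAt (fun t => Sum.elim (ϑ t) (deriv ϑ t))
      (Sum.elim (ϑ x) (deriv ϑ x) ᵥ* Fblock m q Az) x := by
  obtain ⟨hϑdiff, -, hϑ'⟩ := (contDiff_succ_iff_deriv (n := 1)).mp hϑ
  rw [sumElim_vecMul_Fblock, ← hode x, smul_smul, inv_mul_cancel₀ hq, one_smul, hasDerivAt_pi]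
  rintro (j | j)
  · exact hasDerivAt_pi.mp (hϑdiff x).hasDerivAt j
  · exact hasDerivAt_pi.mp ((hϑ'.differentiable one_ne_zero) x).hasDerivAt j

theorem sumElim_zero_vecMul_apply_inl {l n o p : Type*} [Fintype l] [Fintype n] (v : n → ℝ)
    (M : Matrix (l ⊕ n) (o ⊕ p) ℝ) (j : o) :
    (Sum.elim 0 v ᵥ* M) (Sum.inl j) = (v ᵥ* M.toBlocks₂₁) j := by
  simp [vecMul, dotProduct, Fintype.sum_sum_type, toBlocks₂₁]

theorem stmt6_general
    (m : ℕ)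
    (Az : Matrix (Fin m) (Fin m) ℝ) (Cz : Fin m → ℝ)
    (q : ℝ) (hq : q ≠ 0)
    (ϑ : ℝ → Fin m → ℝ) (hϑC2 : ContDiff ℝ 2 ϑ)
    (hode : ∀ x : ℝ, q • deriv (deriv ϑ) x = ϑ x ᵥ* Az)
    (h0 : ϑ 0 = 0) :
    (∀ x : ℝ, ϑ x = fun j =>
      (Sum.elim (0 : Fin m → ℝ) (deriv ϑ 0)
        ᵥ* NormedSpace.exp (x • Fblock m q Az)) (Sum.inl j))
    ∧ (ϑ 1 = -Cz → IsUnit (Gblock m q Az).det →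
        deriv ϑ 0 = -(Cz ᵥ* (Gblock m q Az)⁻¹)) := by
  have hsol : ∀ x : ℝ, ϑ x = fun j =>
      (Sum.elim (0 : Fin m → ℝ) (deriv ϑ 0) ᵥ* exp (x • Fblock m q Az)) (Sum.inl j) := by
    intro x
    rw [← h0, ← eq_vecMul_exp_smul_of_hasDerivAt (hasDerivAt_sumElim_deriv_of_ode hq hϑC2 hode)]
    rfl
  refine ⟨hsol, fun h1 hG => ?_⟩
  have hG1 : deriv ϑ 0 ᵥ* Gblock m q Az = -Cz := by
    ext j
    rw [← h1, hsol 1, one_smul, Gblock]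
    exact (sumElim_zero_vecMul_apply_inl _ _ j).symm
  calc deriv ϑ 0 = deriv ϑ 0 ᵥ* (Gblock m q Az * (Gblock m q Az)⁻¹) := by
        rw [mul_nonsing_inv _ hG, vecMul_one]
    _ = -(Cz ᵥ* (Gblock m q Az)⁻¹) := by rw [← vecMul_vecMul, hG1, neg_vecMul]

/-- every C² solution of `q·ϑ'' = ϑ·A_z` with `ϑ(0) = 0` has the explicit
form `ϑ(x) = [0, ϑ'(0)]·exp(Fx)·[I; 0]`; if moreover `ϑ(1) = −C_z` and `G` is
invertible, then `ϑ'(0) = −C_z·G⁻¹`. -/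
theorem stmt6
    (m : ℕ) (hm : 1 ≤ m)
    (Az : Matrix (Fin m) (Fin m) ℝ) (Cz : Fin m → ℝ)
    (q : ℝ) (hq : q ≠ 0)
    (ϑ : ℝ → Fin m → ℝ) (hϑC2 : ContDiff ℝ 2 ϑ)
    (hode : ∀ x : ℝ, q • deriv (deriv ϑ) x = ϑ x ᵥ* Az)
    (h0 : ϑ 0 = 0) :
    (∀ x : ℝ, ϑ x = fun j =>
      (Sum.elim (0 : Fin m → ℝ) (deriv ϑ 0)
        ᵥ* NormedSpace.exp (x • Fblock m q Az)) (Sum.inl j))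
    ∧ (ϑ 1 = -Cz → IsUnit (Gblock m q Az).det →
        deriv ϑ 0 = -(Cz ᵥ* (Gblock m q Az)⁻¹)) :=
  stmt6_general m Az Cz q hq ϑ hϑC2 hode h0
end

section
/- Define w̃(x,t) = ũ(x,t) + ϑ(x)·Z̃(t) + θ(x)·X̃(t). Then w̃ satisfies the target error system: (i) w̃_t(x,t) = q·w̃_xx(x,t) for all x ∈ [0,1], t ≥ 0; (ii) w̃(0,t) = 0 and w̃(1,t) = 0 for all t ≥ 0; and (iii) for all t ≥ 0, Z̃'(t) = A_z·Z̃(t) + P₂·(ϑ'(0)·Z̃(t) + θ'(0)·X̃(t)) − P₂·w̃_x(0,t) and X̃'(t) = A·X̃(t) + P₀·(ϑ'(0)·Z̃(t) + θ'(0)·X̃(t)) − P₀·w̃_x(0,t). -/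
open scoped Matrix
open Set

lemma stmt7_dot_right {k : ℕ} {f : ℝ → Fin k → ℝ} {f' : Fin k → ℝ} (v : Fin k → ℝ) {t : ℝ}
    (hf : HasDerivAt f f' t) : HasDerivAt (fun s => v ⬝ᵥ f s) (v ⬝ᵥ f') t := by
  simp only [dotProduct]
  exact HasDerivAt.fun_sum fun i _ => (hasDerivAt_pi.mp hf i).const_mul (v i)

lemma stmt7_dot_left {k : ℕ} {f : ℝ → Fin k → ℝ} {f' : Fin k → ℝ} (v : Fin k → ℝ) {t : ℝ}
    (hf : HasDerivAt f f' t) : HasDerivAt (fun s => f s ⬝ᵥ v) (f' ⬝ᵥ v) t := by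
  simp only [dotProduct]
  exact HasDerivAt.fun_sum fun i _ => (hasDerivAt_pi.mp hf i).mul_const (v i)

lemma stmt7_partial_x (tu : ℝ → ℝ → ℝ) (htu : ContDiff ℝ (⊤ : ℕ∞) (Function.uncurry tu)) (t : ℝ) :
    (∀ x, HasDerivAt (fun s => tu s t) (fderiv ℝ (Function.uncurry tu) (x,t) (1,0)) x) ∧
    ContDiff ℝ (⊤ : ℕ∞) (fun x => fderiv ℝ (Function.uncurry tu) (x,t) (1,0)) := by
  constructor
  · intro x
    have h1 : HasFDerivAt (Function.uncurry tu) (fderiv ℝ (Function.uncurry tu) (x,t)) (x,t) :=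
      (htu.differentiable (by simp) (x,t)).hasFDerivAt
    have h2 : HasDerivAt (fun s : ℝ => (s, t)) ((1:ℝ), (0:ℝ)) x := by
      simpa using HasDerivAt.prodMk (hasDerivAt_id x) (hasDerivAt_const x t)
    exact h1.comp_hasDerivAt x h2
  · have hf : ContDiff ℝ (⊤ : ℕ∞) (fderiv ℝ (Function.uncurry tu)) := htu.fderiv_right (by simp)
    exact ((ContinuousLinearMap.apply ℝ ℝ ((1:ℝ),(0:ℝ))).contDiff).comp
      (hf.comp (contDiff_id.prodMk contDiff_const))

lemma stmt7_deriv2 {E : Type*} [NormedAddCommGroup E] [NormedSpace ℝ E] {f : ℝ → E}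
    (hf : ContDiff ℝ 2 f) : ContDiff ℝ 1 (deriv f) := by
  have := (contDiff_succ_iff_deriv.mp (by exact_mod_cast hf : ContDiff ℝ ((1:ℕ)+1) f)).2.2
  exact_mod_cast this

/-- the transformation `tw(x,t) = tu(x,t) + ϑ(x)·tZ(t) + θ(x)·tX(t)` maps the
observer error system to the target error system. -/
theorem stmt7
    (n m : ℕ) (hn : 1 ≤ n) (hm : 1 ≤ m)
    (q : ℝ) (hq : q ≠ 0)
    (A : Matrix (Fin n) (Fin n) ℝ) (Az : Matrix (Fin m) (Fin m) ℝ)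
    (CX : Fin n → ℝ) (Cz : Fin m → ℝ)
    (P₀ : Fin n → ℝ) (P₂ : Fin m → ℝ)
    -- kernels
    (ϑ : ℝ → Fin m → ℝ) (hϑC2 : ContDiff ℝ 2 ϑ)
    (hϑode : ∀ x : ℝ, q • deriv (deriv ϑ) x = ϑ x ᵥ* Az)
    (hϑ0 : ϑ 0 = 0) (hϑ1 : ϑ 1 = -Cz)
    (θ : ℝ → Fin n → ℝ) (hθC2 : ContDiff ℝ 2 θ)
    (hθode : ∀ x : ℝ, q • deriv (deriv θ) x = θ x ᵥ* A)
    (hθ0 : θ 0 = -CX) (hθ1 : θ 1 = 0)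
    -- observer gain
    (p₁ : ℝ → ℝ) (hp₁ : ∀ x : ℝ, p₁ x = -(ϑ x ⬝ᵥ P₂) - θ x ⬝ᵥ P₀)
    -- observer error system
    (tu : ℝ → ℝ → ℝ) (htu : ContDiff ℝ (⊤ : ℕ∞) (Function.uncurry tu))
    (tX : ℝ → Fin n → ℝ) (htX : ContDiff ℝ (⊤ : ℕ∞) tX)
    (tZ : ℝ → Fin m → ℝ) (htZ : ContDiff ℝ (⊤ : ℕ∞) tZ)
    (htXode : ∀ t : ℝ, 0 ≤ t →
      deriv tX t = A.mulVec (tX t) - (deriv (fun s => tu s t) 0) • P₀)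
    (htupde : ∀ x ∈ Icc (0:ℝ) 1, ∀ t : ℝ, 0 ≤ t →
      deriv (fun s => tu x s) t =
        q * iteratedDeriv 2 (fun s => tu s t) x - p₁ x * deriv (fun s => tu s t) 0)
    (htu0 : ∀ t : ℝ, 0 ≤ t → tu 0 t = CX ⬝ᵥ tX t)
    (htu1 : ∀ t : ℝ, 0 ≤ t → tu 1 t = Cz ⬝ᵥ tZ t)
    (htZode : ∀ t : ℝ, 0 ≤ t →
      deriv tZ t = Az.mulVec (tZ t) - (deriv (fun s => tu s t) 0) • P₂)
    -- the transformation
    (tw : ℝ → ℝ → ℝ)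
    (htw : ∀ x t : ℝ, tw x t = tu x t + ϑ x ⬝ᵥ tZ t + θ x ⬝ᵥ tX t) :
    -- (i) heat equation
    (∀ x ∈ Icc (0:ℝ) 1, ∀ t : ℝ, 0 ≤ t →
      deriv (fun s => tw x s) t = q * iteratedDeriv 2 (fun s => tw s t) x)
    -- (ii) Dirichlet boundary conditions
    ∧ (∀ t : ℝ, 0 ≤ t → tw 0 t = 0 ∧ tw 1 t = 0)
    -- (iii) the ODE part of the target error system
    ∧ (∀ t : ℝ, 0 ≤ t →
        deriv tZ t = Az.mulVec (tZ t)
          + (deriv ϑ 0 ⬝ᵥ tZ t + deriv θ 0 ⬝ᵥ tX t) • P₂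
          - (deriv (fun s => tw s t) 0) • P₂
        ∧ deriv tX t = A.mulVec (tX t)
          + (deriv ϑ 0 ⬝ᵥ tZ t + deriv θ 0 ⬝ᵥ tX t) • P₀
          - (deriv (fun s => tw s t) 0) • P₀) := by
  have hϑd : Differentiable ℝ ϑ := hϑC2.differentiable (by norm_num)
  have hθd : Differentiable ℝ θ := hθC2.differentiable (by norm_num)
  have hϑ'd : Differentiable ℝ (deriv ϑ) := (stmt7_deriv2 hϑC2).differentiable one_ne_zero
  have hθ'd : Differentiable ℝ (deriv θ) := (stmt7_deriv2 hθC2).differentiable one_ne_zero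
  have htZd : Differentiable ℝ tZ := htZ.differentiable (by simp)
  have htXd : Differentiable ℝ tX := htX.differentiable (by simp)
  set D : ℝ → ℝ → ℝ := fun x t => fderiv ℝ (Function.uncurry tu) (x,t) (1,0) with hD
  have hDeq : ∀ t, deriv (fun s => tu s t) = fun x => D x t :=
    fun t => funext fun x => ((stmt7_partial_x tu htu t).1 x).deriv
  -- derivative of tw in x
  have hweq : ∀ t, (fun s => tw s t) = fun s => tu s t + ϑ s ⬝ᵥ tZ t + θ s ⬝ᵥ tX t :=
    fun t => funext fun s => htw s t
  have hwx : ∀ t x, HasDerivAt (fun s => tw s t)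
      (D x t + deriv ϑ x ⬝ᵥ tZ t + deriv θ x ⬝ᵥ tX t) x := by
    intro t x
    rw [hweq t]
    exact (((stmt7_partial_x tu htu t).1 x).add
      (stmt7_dot_left (tZ t) (hϑd x).hasDerivAt)).add
      (stmt7_dot_left (tX t) (hθd x).hasDerivAt)
  have hwxderiv : ∀ t, deriv (fun s => tw s t) =
      fun x => D x t + deriv ϑ x ⬝ᵥ tZ t + deriv θ x ⬝ᵥ tX t :=
    fun t => funext fun x => (hwx t x).deriv
  have hwxx : ∀ t x, deriv (deriv (fun s => tw s t)) x =
      deriv (fun x => D x t) x + deriv (deriv ϑ) x ⬝ᵥ tZ t + deriv (deriv θ) x ⬝ᵥ tX t := by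
    intro t x
    rw [hwxderiv t]
    have h1 : HasDerivAt (fun x => D x t) (deriv (fun x => D x t) x) x :=
      (((stmt7_partial_x tu htu t).2).differentiable (by simp) x).hasDerivAt
    exact ((h1.add (stmt7_dot_left (tZ t) (hϑ'd x).hasDerivAt)).add
      (stmt7_dot_left (tX t) (hθ'd x).hasDerivAt)).deriv
  have hu0 : ∀ t, deriv (fun s => tu s t) 0 = D 0 t := fun t => congrFun (hDeq t) 0
  have hw0 : ∀ t, deriv (fun s => tw s t) 0 =
      D 0 t + deriv ϑ 0 ⬝ᵥ tZ t + deriv θ 0 ⬝ᵥ tX t := fun t => (hwx t 0).deriv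
  refine ⟨?_, ?_, ?_⟩
  · -- heat equation
    intro x hx t ht
    -- time derivative of tw
    have hutd : Differentiable ℝ (fun s => tu x s) := by
      have : ContDiff ℝ (⊤ : ℕ∞) (fun s : ℝ => tu x s) := htu.comp (contDiff_const.prodMk contDiff_id)
      exact this.differentiable (by simp)
    have hwt : deriv (fun s => tw x s) t =
        deriv (fun s => tu x s) t + ϑ x ⬝ᵥ deriv tZ t + θ x ⬝ᵥ deriv tX t := by
      have heq : (fun s => tw x s) = fun s => tu x s + ϑ x ⬝ᵥ tZ s + θ x ⬝ᵥ tX s :=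
        funext fun s => htw x s
      rw [heq]
      exact ((((hutd t).hasDerivAt).add
        (stmt7_dot_right (ϑ x) (htZd t).hasDerivAt)).add
        (stmt7_dot_right (θ x) (htXd t).hasDerivAt)).deriv
    have hkey1 : ϑ x ⬝ᵥ Az.mulVec (tZ t) = q * (deriv (deriv ϑ) x ⬝ᵥ tZ t) := by
      rw [Matrix.dotProduct_mulVec, ← hϑode x, smul_dotProduct, smul_eq_mul]
    have hkey2 : θ x ⬝ᵥ A.mulVec (tX t) = q * (deriv (deriv θ) x ⬝ᵥ tX t) := by
      rw [Matrix.dotProduct_mulVec, ← hθode x, smul_dotProduct, smul_eq_mul]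
    have hitw : iteratedDeriv 2 (fun s => tw s t) x = deriv (deriv (fun s => tw s t)) x := by
      rw [show (2:ℕ) = 1 + 1 from rfl, iteratedDeriv_succ, iteratedDeriv_one]
    have hitu : iteratedDeriv 2 (fun s => tu s t) x = deriv (fun x => D x t) x := by
      rw [show (2:ℕ) = 1 + 1 from rfl, iteratedDeriv_succ, iteratedDeriv_one, hDeq t]
    rw [hwt, htupde x hx t ht, htZode t ht, htXode t ht, hitu, hitw, hwxx t x,
      dotProduct_sub, dotProduct_sub, dotProduct_smul,
      dotProduct_smul, hkey1, hkey2, hp₁ x, smul_eq_mul, smul_eq_mul]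
    ring
  · -- boundary conditions
    intro t ht
    constructor
    · rw [htw 0 t, htu0 t ht, hϑ0, hθ0]
      simp [neg_dotProduct]
    · rw [htw 1 t, htu1 t ht, hϑ1, hθ1]
      simp [neg_dotProduct]
  · -- ODE part
    intro t ht
    constructor
    · rw [htZode t ht, hw0 t, hu0 t]
      ext i
      simp only [Pi.add_apply, Pi.sub_apply, Pi.smul_apply, smul_eq_mul]
      ring
    · rw [htXode t ht, hw0 t, hu0 t]
      ext i
      simp only [Pi.add_apply, Pi.sub_apply, Pi.smul_apply, smul_eq_mul]
      ring
end

section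
/- There exist constants Υ > 0 and λ > 0, depending only on q, such that for every smooth solution w̃ of the Dirichlet heat equation, the boundary trace satisfies w̃_x(0,t)² ≤ Υ · e^{−λt} · Σ_{i=0}^{2} ‖∂_x^i w̃(·,0)‖² for all t ≥ 0. -/
open Set intervalIntegral MeasureTheory

noncomputable def pd (v : ℝ × ℝ) (F : ℝ × ℝ → ℝ) (p : ℝ × ℝ) : ℝ := fderiv ℝ F p v

lemma pd_contDiff {F : ℝ × ℝ → ℝ} (hF : ContDiff ℝ (⊤ : ℕ∞) F) (v : ℝ × ℝ) :
    ContDiff ℝ (⊤ : ℕ∞) (pd v F) :=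
  (hF.fderiv_right (by simp)).clm_apply contDiff_const

lemma hasDerivAt_fst {F : ℝ × ℝ → ℝ} (hF : ContDiff ℝ (⊤ : ℕ∞) F) (x t : ℝ) :
    HasDerivAt (fun s => F (s, t)) (pd (1,0) F (x,t)) x := by
  have h1 : HasDerivAt (fun s : ℝ => (s, t)) ((1:ℝ), (0:ℝ)) x :=
    (hasDerivAt_id x).prodMk (hasDerivAt_const x t)
  exact (hF.differentiable (by simp) (x,t)).hasFDerivAt.comp_hasDerivAt x h1

lemma hasDerivAt_snd {F : ℝ × ℝ → ℝ} (hF : ContDiff ℝ (⊤ : ℕ∞) F) (x t : ℝ) :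
    HasDerivAt (fun s => F (x, s)) (pd (0,1) F (x,t)) t := by
  have h1 : HasDerivAt (fun s : ℝ => (x, s)) ((0:ℝ), (1:ℝ)) t :=
    (hasDerivAt_const t x).prodMk (hasDerivAt_id t)
  exact (hF.differentiable (by simp) (x,t)).hasFDerivAt.comp_hasDerivAt t h1

lemma pd_hasFDerivAt {F : ℝ × ℝ → ℝ} (hF : ContDiff ℝ (⊤ : ℕ∞) F) (v : ℝ × ℝ) (p : ℝ × ℝ) :
    HasFDerivAt (pd v F) ((ContinuousLinearMap.apply ℝ ℝ v).comp
      (fderiv ℝ (fderiv ℝ F) p)) p := by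
  have h1 : HasFDerivAt (fderiv ℝ F) (fderiv ℝ (fderiv ℝ F) p) p :=
    ((hF.fderiv_right (m := (⊤ : ℕ∞)) (by simp)).differentiable (by simp) p).hasFDerivAt
  exact (ContinuousLinearMap.apply ℝ ℝ v).hasFDerivAt.comp p h1

lemma pd_comm {F : ℝ × ℝ → ℝ} (hF : ContDiff ℝ (⊤ : ℕ∞) F) (u v : ℝ × ℝ) (p : ℝ × ℝ) :
    pd u (pd v F) p = pd v (pd u F) p := by
  have hsymm : ∀ a b : ℝ × ℝ, fderiv ℝ (fderiv ℝ F) p a b = fderiv ℝ (fderiv ℝ F) p b a := by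
    intro a b
    exact second_derivative_symmetric
      (fun y => (hF.differentiable (by simp) y).hasFDerivAt)
      (((hF.fderiv_right (m := (⊤ : ℕ∞)) (by simp)).differentiable (by simp) p).hasFDerivAt) a b
  have h1 := (pd_hasFDerivAt hF v p).fderiv
  have h2 := (pd_hasFDerivAt hF u p).fderiv
  simp only [pd, h1, h2, ContinuousLinearMap.coe_comp', Function.comp_apply,
    ContinuousLinearMap.apply_apply]
  exact hsymm u v

/-- FTC step: `f y ^ 2 - f 0 ^ 2 = ∫ 2 f f'`. -/
lemma sq_diff_eq {f f' : ℝ → ℝ} (hf : ∀ x, HasDerivAt f (f' x) x)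
    (hfc : Continuous f) (hf'c : Continuous f') (y : ℝ) :
    f y ^ 2 - f 0 ^ 2 = ∫ s in (0:ℝ)..y, 2 * f s * f' s := by
  have h : ∀ x ∈ uIcc (0:ℝ) y, HasDerivAt (fun s => f s ^ 2) (2 * f x * f' x) x := by
    intro x _
    have h := ((hf x).mul (hf x)); have e1 : (fun s => f s ^ 2) = fun s => f s * f s := by ext s; ring
    rw [e1]; exact h.congr_deriv (by ring)
  rw [integral_eq_sub_of_hasDerivAt h
    (((continuous_const.mul hfc).mul hf'c).intervalIntegrable _ _)]

/-- Poincaré-type inequality with constant 2 on `[0,1]` for `f 0 = 0`. -/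
lemma poincare {f f' : ℝ → ℝ} (hf : ∀ x, HasDerivAt f (f' x) x)
    (hfc : Continuous f) (hf'c : Continuous f') (h0 : f 0 = 0) :
    ∫ x in (0:ℝ)..1, f x ^ 2 ≤ 2 * ∫ x in (0:ℝ)..1, f' x ^ 2 := by
  set G : ℝ → ℝ := fun y => ∫ s in (0:ℝ)..y, f s ^ 2 with hG
  set K : ℝ → ℝ := fun y => ∫ s in (0:ℝ)..y, f' s ^ 2 with hK
  have hfsq : Continuous fun s => f s ^ 2 := hfc.pow 2
  have hf'sq : Continuous fun s => f' s ^ 2 := hf'c.pow 2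
  have hGd : ∀ y, HasDerivAt G (f y ^ 2) y := fun y =>
    integral_hasDerivAt_right (hfsq.intervalIntegrable _ _)
      (hfsq.stronglyMeasurableAtFilter _ _) hfsq.continuousAt
  -- pointwise bound: f y ^ 2 ≤ G y + K y for y ∈ [0,1]
  have hpoint : ∀ y ∈ Icc (0:ℝ) 1, f y ^ 2 ≤ G y + K y := by
    intro y hy
    have h1 : f y ^ 2 = ∫ s in (0:ℝ)..y, 2 * f s * f' s := by
      have := sq_diff_eq hf hfc hf'c y; rw [h0] at this; linarith
    have h2 : (∫ s in (0:ℝ)..y, 2 * f s * f' s) ≤ ∫ s in (0:ℝ)..y, (f s ^ 2 + f' s ^ 2) := by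
      apply integral_mono_on hy.1
        (((continuous_const.mul hfc).mul hf'c).intervalIntegrable _ _)
        ((hfsq.add hf'sq).intervalIntegrable _ _)
      intro x _
      simp only [Pi.add_apply, Pi.mul_apply, Pi.neg_apply]
      nlinarith [sq_nonneg (f x - f' x)]
    rw [h1]
    calc (∫ s in (0:ℝ)..y, 2 * f s * f' s) ≤ ∫ s in (0:ℝ)..y, (f s ^ 2 + f' s ^ 2) := h2
      _ = G y + K y := integral_add (hfsq.intervalIntegrable _ _) (hf'sq.intervalIntegrable _ _)
  -- K monotone-ish: K y ≤ K 1 for y ∈ [0,1]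
  have hKmono : ∀ y ∈ Icc (0:ℝ) 1, K y ≤ K 1 := by
    intro y hy
    have : K y + ∫ s in y..(1:ℝ), f' s ^ 2 = K 1 :=
      integral_add_adjacent_intervals (hf'sq.intervalIntegrable _ _)
        (hf'sq.intervalIntegrable _ _)
    have hnn : 0 ≤ ∫ s in y..(1:ℝ), f' s ^ 2 :=
      integral_nonneg hy.2 (fun x _ => sq_nonneg _)
    linarith
  -- ψ y = exp (-y) * (G y + K 1) is antitone on [0,1]
  set ψ : ℝ → ℝ := fun y => Real.exp (-y) * (G y + K 1) with hψ
  have hψd : ∀ y, HasDerivAt ψ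
      (-Real.exp (-y) * (G y + K 1) + Real.exp (-y) * (f y ^ 2)) y := by
    intro y
    have he : HasDerivAt (fun y : ℝ => Real.exp (-y)) (-Real.exp (-y)) y := by
      simpa [Function.comp_def] using ((Real.hasDerivAt_exp (-y)).comp y (hasDerivAt_neg y))
    exact (he.mul ((hGd y).add_const (K 1))).congr_deriv (by ring)
  have hanti : AntitoneOn ψ (Icc 0 1) := by
    apply antitoneOn_of_deriv_nonpos (convex_Icc 0 1)
      (fun y _ => ((hψd y).continuousAt).continuousWithinAt)
      (fun y _ => ((hψd y).differentiableAt).differentiableWithinAt)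
    intro y hy
    rw [interior_Icc] at hy
    rw [(hψd y).deriv]
    have h1 := hpoint y ⟨le_of_lt hy.1, le_of_lt hy.2⟩
    have h2 := hKmono y ⟨le_of_lt hy.1, le_of_lt hy.2⟩
    have he : (0:ℝ) < Real.exp (-y) := Real.exp_pos _
    nlinarith
  have h10 : ψ 1 ≤ ψ 0 := hanti ⟨le_refl 0, zero_le_one⟩ ⟨zero_le_one, le_refl 1⟩ zero_le_one
  have hG0 : G 0 = 0 := integral_same
  have hK1 : 0 ≤ K 1 := integral_nonneg zero_le_one (fun x _ => sq_nonneg _)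
  have hψ0 : ψ 0 = K 1 := by simp [hψ, hG0]
  have hexp : Real.exp (-1 : ℝ) * 3 ≥ 1 := by
    rw [ge_iff_le, ← Real.exp_log (by norm_num : (0:ℝ) < 3), ← Real.exp_add]
    apply Real.one_le_exp
    have : Real.log 3 ≥ 1 := by
      rw [ge_iff_le, Real.le_log_iff_exp_le (by norm_num)]
      exact le_of_lt (lt_of_lt_of_le Real.exp_one_lt_d9 (by norm_num))
    linarith
  have he1 : (0:ℝ) < Real.exp (-1:ℝ) := Real.exp_pos _
  -- ψ 1 = exp(-1) * (G 1 + K 1) ≤ K 1  ⇒  G 1 ≤ (e - 1) K 1 ≤ 2 K 1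
  have : Real.exp (-1:ℝ) * (G 1 + K 1) ≤ K 1 := by
    have h := h10; rw [hψ0] at h; simpa [hψ] using h
  nlinarith

/-- trace bound: `g 0 ^ 2 ≤ 2∫g² + ∫g'²` on `[0,1]`. -/
lemma trace_bound {g g' : ℝ → ℝ} (hg : ∀ x, HasDerivAt g (g' x) x)
    (hgc : Continuous g) (hg'c : Continuous g') :
    g 0 ^ 2 ≤ 2 * (∫ x in (0:ℝ)..1, g x ^ 2) + ∫ x in (0:ℝ)..1, g' x ^ 2 := by
  have hgsq : Continuous fun s => g s ^ 2 := hgc.pow 2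
  have hg'sq : Continuous fun s => g' s ^ 2 := hg'c.pow 2
  set A : ℝ := ∫ x in (0:ℝ)..1, (g x ^ 2 + g' x ^ 2) with hA
  have hpoint : ∀ y ∈ Icc (0:ℝ) 1, g 0 ^ 2 - A ≤ g y ^ 2 := by
    intro y hy
    have h1 := sq_diff_eq hg hgc hg'c y
    have h2 : -(∫ s in (0:ℝ)..y, 2 * g s * g' s) ≤ ∫ s in (0:ℝ)..y, (g s ^ 2 + g' s ^ 2) := by
      rw [← intervalIntegral.integral_neg]
      apply integral_mono_on hy.1
        (((continuous_const.mul hgc).mul hg'c).neg.intervalIntegrable _ _)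
        ((hgsq.add hg'sq).intervalIntegrable _ _)
      intro x _
      simp only [Pi.add_apply, Pi.mul_apply, Pi.neg_apply]
      nlinarith [sq_nonneg (g x + g' x)]
    have h3 : (∫ s in (0:ℝ)..y, (g s ^ 2 + g' s ^ 2)) ≤ A := by
      have hadd : (∫ s in (0:ℝ)..y, (g s ^ 2 + g' s ^ 2))
          + ∫ s in y..(1:ℝ), (g s ^ 2 + g' s ^ 2) = A :=
        integral_add_adjacent_intervals ((hgsq.add hg'sq).intervalIntegrable _ _)
          ((hgsq.add hg'sq).intervalIntegrable _ _)
      have hnn : 0 ≤ ∫ s in y..(1:ℝ), (g s ^ 2 + g' s ^ 2) :=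
        integral_nonneg hy.2 (fun x _ => by positivity)
      linarith
    linarith
  have hint : (∫ y in (0:ℝ)..1, (g 0 ^ 2 - A)) ≤ ∫ y in (0:ℝ)..1, g y ^ 2 :=
    integral_mono_on zero_le_one (intervalIntegrable_const) (hgsq.intervalIntegrable _ _) hpoint
  rw [intervalIntegral.integral_const] at hint
  have hAeq : A = (∫ x in (0:ℝ)..1, g x ^ 2) + ∫ x in (0:ℝ)..1, g' x ^ 2 :=
    integral_add (hgsq.intervalIntegrable _ _) (hg'sq.intervalIntegrable _ _)
  simp at hint
  linarith

/-- integration by parts: if `f 0 = f 1 = 0` then `∫ f'² = -∫ f f''`. -/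
lemma ibp_zero {f f' f'' : ℝ → ℝ} (hf : ∀ x, HasDerivAt f (f' x) x)
    (hf' : ∀ x, HasDerivAt f' (f'' x) x)
    (hf'c : Continuous f') (hf''c : Continuous f'')
    (h0 : f 0 = 0) (h1 : f 1 = 0) :
    ∫ x in (0:ℝ)..1, f' x ^ 2 = -∫ x in (0:ℝ)..1, f x * f'' x := by
  have h := integral_mul_deriv_eq_deriv_mul (a := (0:ℝ)) (b := 1) (u := f) (v := f') (u' := f') (v' := f'')
    (fun x _ => hf x) (fun x _ => hf' x)
    (hf'c.intervalIntegrable _ _) (hf''c.intervalIntegrable _ _)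
  rw [h0, h1] at h
  have e : (∫ x in (0:ℝ)..1, f' x * f' x) = ∫ x in (0:ℝ)..1, f' x ^ 2 := by
    apply integral_congr; intro x _; ring
  linarith [h, e]

lemma param_hasDerivAt {G : ℝ × ℝ → ℝ} (hG : ContDiff ℝ (⊤ : ℕ∞) G) (t₀ : ℝ) :
    HasDerivAt (fun t => ∫ x in (0:ℝ)..1, G (x, t))
      (∫ x in (0:ℝ)..1, pd (0,1) G (x, t₀)) t₀ := by
  have hGc : Continuous G := hG.continuous
  have hG'c : Continuous (pd (0,1) G) := (pd_contDiff hG _).continuous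
  -- bound on compact set
  obtain ⟨C, hC⟩ : ∃ C, ∀ p ∈ (Icc (0:ℝ) 1 ×ˢ Icc (t₀ - 1) (t₀ + 1)), ‖pd (0,1) G p‖ ≤ C :=
    ((isCompact_Icc.prod isCompact_Icc).exists_bound_of_continuousOn
      hG'c.continuousOn)
  have key := intervalIntegral.hasDerivAt_integral_of_dominated_loc_of_deriv_le
    (F := fun t x => G (x, t)) (F' := fun t x => pd (0,1) G (x, t))
    (a := (0:ℝ)) (b := 1) (μ := volume) (x₀ := t₀) (bound := fun _ => C)
    (Metric.ball_mem_nhds t₀ one_pos)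
    (Filter.Eventually.of_forall fun t =>
      ((hGc.comp (continuous_id.prodMk continuous_const)).aestronglyMeasurable).restrict)
    ((hGc.comp (continuous_id.prodMk continuous_const)).intervalIntegrable _ _)
    (((hG'c.comp (continuous_id.prodMk continuous_const)).aestronglyMeasurable).restrict)
    (Filter.Eventually.of_forall fun x hx => fun t ht => by
      apply hC
      rw [uIoc_of_le (zero_le_one)] at hx
      have h2 := Metric.mem_ball.mp ht
      rw [Real.dist_eq] at h2
      have h3 := abs_lt.mp h2
      exact ⟨⟨le_of_lt hx.1, hx.2⟩, ⟨by linarith [h3.1], by linarith [h3.2]⟩⟩)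
    (intervalIntegrable_const)
    (Filter.Eventually.of_forall fun x _ => fun t _ => hasDerivAt_snd hG x t)
  exact key.2

lemma deriv_congr_Ici {f g : ℝ → ℝ} {t : ℝ} (hf : DifferentiableAt ℝ f t)
    (hg : DifferentiableAt ℝ g t) (ht : 0 ≤ t) (heq : ∀ s, 0 ≤ s → f s = g s) :
    deriv f t = deriv g t := by
  have h1 : HasDerivWithinAt f (deriv f t) (Ici 0) t := hf.hasDerivAt.hasDerivWithinAt
  have h2 : HasDerivWithinAt g (deriv f t) (Ici 0) t :=
    h1.congr (fun s hs => (heq s hs).symm) ((heq t ht).symm)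
  have h3 := h2.derivWithin (uniqueDiffOn_Ici 0 t (mem_Ici.mpr ht))
  have h4 := hg.hasDerivAt.hasDerivWithinAt.derivWithin (uniqueDiffOn_Ici 0 t (mem_Ici.mpr ht))
  rw [← h3, ← h4]

lemma pd_sq {W : ℝ × ℝ → ℝ} (hW : ContDiff ℝ (⊤ : ℕ∞) W) (v p : ℝ × ℝ) :
    pd v (fun y => W y ^ 2) p = 2 * W p * pd v W p := by
  have h := ((hW.differentiable (by simp) p).hasFDerivAt.mul
    (hW.differentiable (by simp) p).hasFDerivAt)
  have e : (fun y => W y ^ 2) = W * W := by ext y; rw [Pi.mul_apply]; ring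
  rw [pd, e, h.fderiv]
  simp [pd]
  ring

lemma energy_decay (q : ℝ) (hq : 0 < q) (W : ℝ × ℝ → ℝ) (hW : ContDiff ℝ (⊤ : ℕ∞) W)
    (hpde : ∀ x ∈ Icc (0:ℝ) 1, ∀ t : ℝ, 0 ≤ t →
      pd (0,1) W (x,t) = q * pd (1,0) (pd (1,0) W) (x,t))
    (hbc : ∀ t : ℝ, 0 ≤ t → W (0,t) = 0 ∧ W (1,t) = 0) :
    ∀ t : ℝ, 0 ≤ t →
      (∫ x in (0:ℝ)..1, W (x,t) ^ 2) ≤ Real.exp (-q*t) * ∫ x in (0:ℝ)..1, W (x,0) ^ 2 := by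
  have hWx := pd_contDiff hW (1,0)
  have hWxx := pd_contDiff hWx (1,0)
  have hWsq : ContDiff ℝ (⊤ : ℕ∞) (fun y => W y ^ 2) := hW.pow 2
  set E : ℝ → ℝ := fun t => ∫ x in (0:ℝ)..1, W (x,t) ^ 2 with hE
  have hEd : ∀ t, HasDerivAt E (∫ x in (0:ℝ)..1, pd (0,1) (fun y => W y ^ 2) (x,t)) t :=
    fun t => param_hasDerivAt hWsq t
  -- the derivative bound for t ≥ 0
  have hkey : ∀ t : ℝ, 0 ≤ t →
      (∫ x in (0:ℝ)..1, pd (0,1) (fun y => W y ^ 2) (x,t)) ≤ -q * E t := by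
    intro t ht
    have hfd : ∀ x, HasDerivAt (fun s => W (s,t)) (pd (1,0) W (x,t)) x :=
      fun x => hasDerivAt_fst hW x t
    have hf'd : ∀ x, HasDerivAt (fun s => pd (1,0) W (s,t)) (pd (1,0) (pd (1,0) W) (x,t)) x :=
      fun x => hasDerivAt_fst hWx x t
    have hfc : Continuous fun s => W (s,t) :=
      hW.continuous.comp (continuous_id.prodMk continuous_const)
    have hf'c : Continuous fun s => pd (1,0) W (s,t) :=
      hWx.continuous.comp (continuous_id.prodMk continuous_const)
    have hf''c : Continuous fun s => pd (1,0) (pd (1,0) W) (s,t) :=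
      hWxx.continuous.comp (continuous_id.prodMk continuous_const)
    have h1 : (∫ x in (0:ℝ)..1, pd (0,1) (fun y => W y ^ 2) (x,t))
        = (2*q) * ∫ x in (0:ℝ)..1, W (x,t) * pd (1,0) (pd (1,0) W) (x,t) := by
      rw [← intervalIntegral.integral_const_mul]
      apply integral_congr
      intro x hx
      rw [uIcc_of_le zero_le_one] at hx
      simp only []
      rw [pd_sq hW, hpde x hx t ht]
      ring
    have h2 : (∫ x in (0:ℝ)..1, (fun s => pd (1,0) W (s,t)) x ^ 2)
        = -∫ x in (0:ℝ)..1, (fun s => W (s,t)) x * (fun s => pd (1,0) (pd (1,0) W) (s,t)) x :=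
      ibp_zero hfd hf'd hf'c hf''c (hbc t ht).1 (hbc t ht).2
    have h3 : (∫ x in (0:ℝ)..1, (fun s => W (s,t)) x ^ 2)
        ≤ 2 * ∫ x in (0:ℝ)..1, (fun s => pd (1,0) W (s,t)) x ^ 2 :=
      poincare hfd hfc hf'c (hbc t ht).1
    simp only at h2 h3
    rw [h1]
    have : (∫ x in (0:ℝ)..1, W (x,t) * pd (1,0) (pd (1,0) W) (x,t))
        = -∫ x in (0:ℝ)..1, pd (1,0) W (x,t) ^ 2 := by linarith
    rw [this, hE]
    nlinarith
  -- Gronwall via antitonicity of F t = exp (q t) * E t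
  set F : ℝ → ℝ := fun t => Real.exp (q*t) * E t with hF
  have hFd : ∀ t, HasDerivAt F
      (q * Real.exp (q*t) * E t
        + Real.exp (q*t) * ∫ x in (0:ℝ)..1, pd (0,1) (fun y => W y ^ 2) (x,t)) t := by
    intro t
    have he : HasDerivAt (fun t : ℝ => Real.exp (q*t)) (q * Real.exp (q*t)) t := by
      have := (Real.hasDerivAt_exp (q*t)).comp t ((hasDerivAt_id t).const_mul q)
      simpa [mul_comm, Function.comp_def] using this
    exact (he.mul (hEd t)).congr_deriv (by ring)
  have hanti : AntitoneOn F (Ici 0) := by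
    apply antitoneOn_of_deriv_nonpos (convex_Ici 0)
      (fun t _ => ((hFd t).continuousAt).continuousWithinAt)
      (fun t ht => ((hFd t).differentiableAt).differentiableWithinAt)
    intro t ht
    rw [interior_Ici] at ht
    rw [(hFd t).deriv]
    have h1 := hkey t (le_of_lt ht)
    have h2 : (0:ℝ) < Real.exp (q*t) := Real.exp_pos _
    nlinarith
  intro t ht
  have h1 : F t ≤ F 0 := hanti (mem_Ici.mpr (le_refl 0)) (mem_Ici.mpr ht) ht
  have h2 : F 0 = E 0 := by simp [hF]
  have h3 : (0:ℝ) < Real.exp (q*t) := Real.exp_pos _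
  have h4 : Real.exp (-q*t) * Real.exp (q*t) = 1 := by
    rw [← Real.exp_add]; ring_nf; exact Real.exp_zero
  have h5 : Real.exp (q*t) * E t ≤ E 0 := by rw [← h2]; exact h1
  have h6 : Real.exp (-q*t) * (Real.exp (q*t) * E t) ≤ Real.exp (-q*t) * E 0 :=
    mul_le_mul_of_nonneg_left h5 (le_of_lt (Real.exp_pos _))
  calc E t = Real.exp (-q*t) * Real.exp (q*t) * E t := by rw [h4]; ring
    _ = Real.exp (-q*t) * (Real.exp (q*t) * E t) := by ring
    _ ≤ Real.exp (-q*t) * E 0 := h6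

/-- exponential decay of the boundary trace `w̃_x(0,t)²` for smooth
solutions of the Dirichlet heat equation, with constants depending only on `q`. -/
theorem stmt13
    (q : ℝ) (hq : 0 < q) :
    ∃ Υ lam : ℝ, 0 < Υ ∧ 0 < lam ∧
      ∀ tw : ℝ → ℝ → ℝ,
        ContDiff ℝ (⊤ : ℕ∞) (Function.uncurry tw) →
        (∀ x ∈ Icc (0:ℝ) 1, ∀ t : ℝ, 0 ≤ t →
          deriv (fun s => tw x s) t = q * iteratedDeriv 2 (fun s => tw s t) x) →
        (∀ t : ℝ, 0 ≤ t → tw 0 t = 0 ∧ tw 1 t = 0) →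
        ∀ t : ℝ, 0 ≤ t →
          (deriv (fun s => tw s t) 0) ^ 2
            ≤ Υ * Real.exp (-lam * t) *
                ∑ i ∈ Finset.range 3,
                  ∫ x in (0:ℝ)..1, (iteratedDeriv i (fun s => tw s 0) x) ^ 2 := by
  refine ⟨2, q, two_pos, hq, ?_⟩
  intro tw hW hpde hbc t ht
  set W : ℝ × ℝ → ℝ := Function.uncurry tw with hWdef
  have hWx := pd_contDiff hW (1,0)
  have hWxx := pd_contDiff hWx (1,0)
  have hV : ContDiff ℝ (⊤ : ℕ∞) (pd (0,1) W) := pd_contDiff hW (0,1)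
  set V : ℝ × ℝ → ℝ := pd (0,1) W with hVdef
  -- translate derivatives
  have c2 : ∀ s : ℝ, deriv (fun s' => tw s' s) = fun x => pd (1,0) W (x,s) := by
    intro s; funext x; exact (hasDerivAt_fst hW x s).deriv
  have c3 : ∀ (s x : ℝ), iteratedDeriv 2 (fun s' => tw s' s) x
      = pd (1,0) (pd (1,0) W) (x,s) := by
    intro s x
    rw [iteratedDeriv_succ, iteratedDeriv_one, c2 s]
    exact (hasDerivAt_fst hWx x s).deriv
  have hpde' : ∀ x ∈ Icc (0:ℝ) 1, ∀ s : ℝ, 0 ≤ s →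
      pd (0,1) W (x,s) = q * pd (1,0) (pd (1,0) W) (x,s) := by
    intro x hx s hs
    rw [← c3 s x, ← (hasDerivAt_snd hW x s).deriv]
    exact hpde x hx s hs
  -- decay of ∫ W²
  have hEW := energy_decay q hq W hW hpde' (fun s hs => ⟨(hbc s hs).1, (hbc s hs).2⟩) t ht
  -- V := ∂ₜW also solves the heat equation with Dirichlet BC
  have hVbc : ∀ s : ℝ, 0 ≤ s → V (0,s) = 0 ∧ V (1,s) = 0 := by
    intro s hs
    constructor
    · rw [hVdef, ← (hasDerivAt_snd hW 0 s).deriv]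
      rw [deriv_congr_Ici (hasDerivAt_snd hW 0 s).differentiableAt
        (differentiableAt_const (0:ℝ)) hs (fun u hu => (hbc u hu).1)]
      exact deriv_const s 0
    · rw [hVdef, ← (hasDerivAt_snd hW 1 s).deriv]
      rw [deriv_congr_Ici (hasDerivAt_snd hW 1 s).differentiableAt
        (differentiableAt_const (0:ℝ)) hs (fun u hu => (hbc u hu).2)]
      exact deriv_const s 0
  have hVpde : ∀ x ∈ Icc (0:ℝ) 1, ∀ s : ℝ, 0 ≤ s →
      pd (0,1) V (x,s) = q * pd (1,0) (pd (1,0) V) (x,s) := by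
    intro x hx s hs
    have l1 : pd (0,1) V (x,s) = deriv (fun u => V (x,u)) s := ((hasDerivAt_snd hV x s).deriv).symm
    have l2 : deriv (fun u => V (x,u)) s
        = deriv (fun u => q * pd (1,0) (pd (1,0) W) (x,u)) s := by
      apply deriv_congr_Ici (hasDerivAt_snd hV x s).differentiableAt
        (((hasDerivAt_snd hWxx x s).const_mul q).differentiableAt) hs
      intro u hu
      exact hpde' x hx u hu
    have l3 : deriv (fun u => q * pd (1,0) (pd (1,0) W) (x,u)) s
        = q * pd (0,1) (pd (1,0) (pd (1,0) W)) (x,s) :=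
      ((hasDerivAt_snd hWxx x s).const_mul q).deriv
    -- commute derivatives:  ∂ₜ∂ₓ∂ₓ W = ∂ₓ∂ₓ∂ₜ W
    have comm1 : pd (0,1) (pd (1,0) W) = pd (1,0) (pd (0,1) W) := by
      funext p; exact pd_comm hW (0,1) (1,0) p
    have comm2 : pd (0,1) (pd (1,0) (pd (1,0) W)) (x,s)
        = pd (1,0) (pd (1,0) V) (x,s) := by
      rw [pd_comm hWx (0,1) (1,0) (x,s), comm1]
    rw [l1, l2, l3, comm2]
  have hEV := energy_decay q hq V hV hVpde hVbc t ht
  -- notation for the six integrals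
  set a0 : ℝ := ∫ x in (0:ℝ)..1, W (x,0) ^ 2 with ha0
  set b0 : ℝ := ∫ x in (0:ℝ)..1, pd (1,0) W (x,0) ^ 2 with hb0
  set c0 : ℝ := ∫ x in (0:ℝ)..1, pd (1,0) (pd (1,0) W) (x,0) ^ 2 with hc0
  set at' : ℝ := ∫ x in (0:ℝ)..1, W (x,t) ^ 2 with hat
  set bt : ℝ := ∫ x in (0:ℝ)..1, pd (1,0) W (x,t) ^ 2 with hbt
  set ct : ℝ := ∫ x in (0:ℝ)..1, pd (1,0) (pd (1,0) W) (x,t) ^ 2 with hct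
  -- continuity helpers at fixed time
  have contx : ∀ (F : ℝ × ℝ → ℝ), ContDiff ℝ (⊤ : ℕ∞) F → ∀ s : ℝ, Continuous fun x => F (x,s) :=
    fun F hF s => hF.continuous.comp (continuous_id.prodMk continuous_const)
  have hWc := contx W hW; have hWxc := contx _ hWx; have hWxxc := contx _ hWxx
  have hVc := contx V hV
  -- relation ∫ V² = q² ∫ Wxx²  (at any s ≥ 0)
  have hVW : ∀ s : ℝ, 0 ≤ s →
      (∫ x in (0:ℝ)..1, V (x,s) ^ 2)
        = q^2 * ∫ x in (0:ℝ)..1, pd (1,0) (pd (1,0) W) (x,s) ^ 2 := by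
    intro s hs
    rw [← intervalIntegral.integral_const_mul]
    apply intervalIntegral.integral_congr
    intro x hx
    rw [uIcc_of_le zero_le_one] at hx
    simp only []
    rw [hVdef, hpde' x hx s hs]
    ring
  -- trace bound at time t
  have htrace : pd (1,0) W (0,t) ^ 2 ≤ 2 * bt + ct :=
    trace_bound (fun x => hasDerivAt_fst hWx x t) (hWxc t) (hWxxc t)
  -- cross bound : bt ≤ (at' + ct)/2
  have hcross : bt ≤ (at' + ct) / 2 := by
    have hibp : bt = -∫ x in (0:ℝ)..1, W (x,t) * pd (1,0) (pd (1,0) W) (x,t) :=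
      ibp_zero (fun x => hasDerivAt_fst hW x t) (fun x => hasDerivAt_fst hWx x t)
        (hWxc t) (hWxxc t) (hbc t ht).1 (hbc t ht).2
    have hmono : (∫ x in (0:ℝ)..1, -(W (x,t) * pd (1,0) (pd (1,0) W) (x,t)))
        ≤ ∫ x in (0:ℝ)..1, (W (x,t) ^ 2 + pd (1,0) (pd (1,0) W) (x,t) ^ 2) / 2 := by
      apply intervalIntegral.integral_mono_on zero_le_one
        (((hWc t).mul (hWxxc t)).neg.intervalIntegrable _ _)
        (((((hWc t).pow 2).add ((hWxxc t).pow 2)).div_const 2).intervalIntegrable _ _)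
      intro x _
      simp only [Pi.add_apply, Pi.mul_apply, Pi.neg_apply, Pi.div_apply, Pi.pow_apply]
      nlinarith [sq_nonneg (W (x,t) + pd (1,0) (pd (1,0) W) (x,t))]
    rw [intervalIntegral.integral_neg] at hmono
    have hsplit : (∫ x in (0:ℝ)..1, (W (x,t) ^ 2 + pd (1,0) (pd (1,0) W) (x,t) ^ 2) / 2)
        = (at' + ct) / 2 := by
      rw [intervalIntegral.integral_div]
      rw [intervalIntegral.integral_add (f := fun x => W (x,t) ^ 2)
        (g := fun x => pd (1,0) (pd (1,0) W) (x,t) ^ 2) (((hWc t).pow 2).intervalIntegrable _ _)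
        (((hWxxc t).pow 2).intervalIntegrable _ _)]
    rw [hsplit] at hmono
    linarith [hibp, hmono]
  -- decay of ct via V
  have hq2 : (0:ℝ) < q ^ 2 := by positivity
  have hctb : ct ≤ Real.exp (-q*t) * c0 := by
    have h1 := hEV
    rw [hVW t ht, hVW 0 le_rfl] at h1
    have h2 : q ^ 2 * ct ≤ q ^ 2 * (Real.exp (-q*t) * c0) := by nlinarith [h1]
    exact le_of_mul_le_mul_left (by linarith) hq2
  -- nonnegativity
  have ha0n : 0 ≤ a0 := intervalIntegral.integral_nonneg zero_le_one (fun x _ => sq_nonneg _)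
  have hb0n : 0 ≤ b0 := intervalIntegral.integral_nonneg zero_le_one (fun x _ => sq_nonneg _)
  have hc0n : 0 ≤ c0 := intervalIntegral.integral_nonneg zero_le_one (fun x _ => sq_nonneg _)
  -- rewrite the goal
  have e0 : ∀ x : ℝ, iteratedDeriv 0 (fun s => tw s 0) x = W (x,0) := fun x => by
    rw [iteratedDeriv_zero]; rfl
  have e1 : ∀ x : ℝ, iteratedDeriv 1 (fun s => tw s 0) x = pd (1,0) W (x,0) := fun x => by
    rw [iteratedDeriv_one, c2 0]
  have e2 : ∀ x : ℝ, iteratedDeriv 2 (fun s => tw s 0) x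
      = pd (1,0) (pd (1,0) W) (x,0) := fun x => c3 0 x
  have hsum : (∑ i ∈ Finset.range 3,
      ∫ x in (0:ℝ)..1, (iteratedDeriv i (fun s => tw s 0) x) ^ 2) = a0 + b0 + c0 := by
    rw [Finset.sum_range_succ, Finset.sum_range_succ, Finset.sum_range_one]
    simp only [e0, e1, e2]
    rfl
  rw [hsum, c2 t]
  have hep : (0:ℝ) < Real.exp (-q*t) := Real.exp_pos _
  have hb0e : 0 ≤ Real.exp (-q*t) * b0 := mul_nonneg hep.le hb0n
  have ha0e : 0 ≤ Real.exp (-q*t) * a0 := mul_nonneg hep.le ha0n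
  nlinarith [htrace, hcross, hctb, hEW, hb0e, ha0e]
end
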